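/- Let 𝐌 : Matrix (Fin p) (Fin q) K and let M : (Fin p) → (Fin q) → WithBot G be given by M i j := val (𝐌 i j). If M is tropically generic, then 𝐌 is generic, i.e., for every k and all injective maps r : Fin k → Fin p, c : Fin k → Fin q, the submatrix 𝐖 := (i, j) ↦ 𝐌 (r i) (c j) satisfies: det 𝐖 ≠ 0, or for every σ ∈ Equiv.Perm (Fin k) the product Π_i 𝐖 i (σ i) equals 0. -/

import Mathlib

/-! Valuations turn products into sums, so the tropical term of a permutation `σ` is the valuation
of the term `∏ i, 𝐖 i (σ i)` of the determinant expansion. If the tropical permanent is `⊥`, all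
these terms vanish. If a unique `σ₀` attains it, every other term has strictly larger order than
the `σ₀`-term, so the coefficient of `det 𝐖` at that order is `±` the nonzero leading coefficient
of the `σ₀`-term. -/

noncomputable section
open scoped Classical

variable {G : Type*} [AddCommGroup G] [LinearOrder G] [IsOrderedAddMonoid G]

/-- The valuation `val : HahnSeries G ℝ → WithBot G`, with `val 𝐱 = -𝐱.order` for `𝐱 ≠ 0`
and `val 0 = ⊥`. -/
def hahnVal (x : HahnSeries G ℝ) : WithBot G :=
  if x = 0 then ⊥ else ↑(-x.order)

/-- Tropical permanent of a square matrix over the max-plus semiring `WithBot G`: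
`tper M = ⊔_σ Σ_i M i (σ i)`, sums taken in `WithBot G` (`⊥` is absorbing for `+`). -/
def tper {k : ℕ} (M : Matrix (Fin k) (Fin k) (WithBot G)) : WithBot G :=
  Finset.univ.sup (fun σ : Equiv.Perm (Fin k) => ∑ i, M i (σ i))

/-- A square matrix over `WithBot G` is tropically nonsingular if its tropical permanent is
not `⊥` and exactly one permutation attains the maximum. -/
def TropNonsingular {k : ℕ} (M : Matrix (Fin k) (Fin k) (WithBot G)) : Prop :=
  tper M ≠ ⊥ ∧ ∃! σ : Equiv.Perm (Fin k), ∑ i, M i (σ i) = tper M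

/-- A (rectangular) matrix over `WithBot G` is tropically generic if each of its square
submatrices is tropically nonsingular or has tropical permanent `⊥`. -/
def TropGeneric {p q : ℕ} (N : Fin p → Fin q → WithBot G) : Prop :=
  ∀ (k : ℕ) (r : Fin k → Fin p) (c : Fin k → Fin q),
    Function.Injective r → Function.Injective c →
      TropNonsingular (Matrix.of fun i j => N (r i) (c j)) ∨
        tper (Matrix.of fun i j => N (r i) (c j)) = ⊥

theorem HahnSeries.sum_ne_zero_of_coeff {Γ R ι : Type*} [PartialOrder Γ] [AddCommMonoid R]
    {s : Finset ι} {f : ι → HahnSeries Γ R} {i₀ : ι} {g : Γ} (hi₀ : i₀ ∈ s)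
    (hg : (f i₀).coeff g ≠ 0) (h : ∀ i ∈ s, i ≠ i₀ → (f i).coeff g = 0) :
    ∑ i ∈ s, f i ≠ 0 := by
  intro hsum
  have hsum_g := congrArg (HahnSeries.coeff · g) hsum
  simp only [HahnSeries.coeff_sum, Finset.sum_eq_single_of_mem i₀ hi₀ h] at hsum_g
  exact hg hsum_g

theorem Matrix.det_ne_zero_of_coeff_order {Γ R n : Type*} [AddCommMonoid Γ] [LinearOrder Γ]
    [IsOrderedCancelAddMonoid Γ] [CommRing R] [Fintype n] [DecidableEq n]
    (W : Matrix n n (HahnSeries Γ R)) {σ₀ : Equiv.Perm n} (h₀ : ∏ i, W i (σ₀ i) ≠ 0)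
    (h : ∀ σ ≠ σ₀, (∏ i, W i (σ i)).coeff (∏ i, W i (σ₀ i)).order = 0) : W.det ≠ 0 := by
  rw [← det_transpose, det_apply]
  refine HahnSeries.sum_ne_zero_of_coeff (g := (∏ i, W i (σ₀ i)).order) (Finset.mem_univ σ₀) ?_
    fun σ _ hσ => ?_
  · simp only [transpose_apply, HahnSeries.coeff_smul]
    exact (smul_ne_zero_iff_ne _).mpr (HahnSeries.coeff_order_eq_zero.not.mpr h₀)
  · simp only [transpose_apply, HahnSeries.coeff_smul, h σ hσ, smul_zero]

section

variable {Γ : Type*} [AddCommGroup Γ] [LinearOrder Γ]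

@[simp] lemma hahnVal_zero : hahnVal (0 : HahnSeries Γ ℝ) = ⊥ := if_pos rfl

@[simp] lemma hahnVal_eq_bot {x : HahnSeries Γ ℝ} : hahnVal x = ⊥ ↔ x = 0 := by
  unfold hahnVal
  split_ifs with hx <;> simp [hx]

lemma sum_le_tper {k : ℕ} (M : Matrix (Fin k) (Fin k) (WithBot Γ)) (σ : Equiv.Perm (Fin k)) :
    ∑ i, M i (σ i) ≤ tper M :=
  Finset.le_sup (f := fun τ : Equiv.Perm (Fin k) => ∑ i, M i (τ i)) (Finset.mem_univ σ)

lemma tper_eq_bot_iff {k : ℕ} (M : Matrix (Fin k) (Fin k) (WithBot Γ)) :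
    tper M = ⊥ ↔ ∀ σ : Equiv.Perm (Fin k), ∑ i, M i (σ i) = ⊥ := by
  simp [tper, Finset.sup_eq_bot_iff]

lemma TropNonsingular.exists_sum_lt {k : ℕ} {M : Matrix (Fin k) (Fin k) (WithBot Γ)}
    (h : TropNonsingular M) :
    ∃ σ₀ : Equiv.Perm (Fin k), ∑ i, M i (σ₀ i) ≠ ⊥ ∧
      ∀ σ ≠ σ₀, ∑ i, M i (σ i) < ∑ i, M i (σ₀ i) := by
  obtain ⟨hne, σ₀, hσ₀, huniq⟩ := h
  refine ⟨σ₀, hσ₀ ▸ hne, fun σ hσ => hσ₀ ▸ ?_⟩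
  exact (sum_le_tper M σ).lt_of_ne fun h => hσ (huniq σ h)

variable [IsOrderedAddMonoid Γ]

lemma hahnVal_mul (x y : HahnSeries Γ ℝ) : hahnVal (x * y) = hahnVal x + hahnVal y := by
  by_cases hx : x = 0
  · simp [hx]
  by_cases hy : y = 0
  · simp [hy]
  rw [hahnVal, hahnVal, hahnVal, if_neg hx, if_neg hy, if_neg (mul_ne_zero hx hy),
    HahnSeries.order_mul hx hy, ← WithBot.coe_add, neg_add]

lemma hahnVal_prod {ι : Type*} (s : Finset ι) (f : ι → HahnSeries Γ ℝ) :
    hahnVal (∏ i ∈ s, f i) = ∑ i ∈ s, hahnVal (f i) := by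
  induction s using Finset.induction with
  | empty => simp [hahnVal, HahnSeries.order_one]
  | insert _ _ h ih => rw [Finset.prod_insert h, Finset.sum_insert h, hahnVal_mul, ih]

lemma coeff_order_eq_zero_of_hahnVal_lt {x y : HahnSeries Γ ℝ} (h : hahnVal x < hahnVal y) :
    x.coeff y.order = 0 := by
  by_cases hx : x = 0
  · simp [hx]
  have hy : y ≠ 0 := by
    rintro rfl
    simp at h
  rw [hahnVal, hahnVal, if_neg hx, if_neg hy, WithBot.coe_lt_coe, neg_lt_neg_iff] at h
  exact HahnSeries.coeff_eq_zero_of_lt_order h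

variable {k : ℕ} (W : Matrix (Fin k) (Fin k) (HahnSeries Γ ℝ))

lemma sum_map_hahnVal (σ : Equiv.Perm (Fin k)) :
    ∑ i, W.map hahnVal i (σ i) = hahnVal (∏ i, W i (σ i)) :=
  (hahnVal_prod _ _).symm

theorem det_ne_zero_of_tropNonsingular (h : TropNonsingular (W.map hahnVal)) : W.det ≠ 0 := by
  obtain ⟨σ₀, hne, hlt⟩ := h.exists_sum_lt
  simp only [sum_map_hahnVal] at hne hlt
  exact W.det_ne_zero_of_coeff_order (hahnVal_eq_bot.not.mp hne)
    fun σ hσ => coeff_order_eq_zero_of_hahnVal_lt (hlt σ hσ)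

theorem prod_eq_zero_of_tper_map_eq_bot (h : tper (W.map hahnVal) = ⊥)
    (σ : Equiv.Perm (Fin k)) : ∏ i, W i (σ i) = 0 := by
  rw [← hahnVal_eq_bot, ← sum_map_hahnVal]
  exact (tper_eq_bot_iff _).mp h σ

end

/-- If the matrix `M = val ∘ 𝐌` of valuations is tropically generic, then
`𝐌` is generic: every square submatrix `𝐖` of `𝐌` has `det 𝐖 ≠ 0`, or all the products
`Π_i 𝐖 i (σ i)` vanish. -/
theorem generic_of_tropically_generic (p q : ℕ)
    (MK : Fin p → Fin q → HahnSeries G ℝ)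
    (M : Fin p → Fin q → WithBot G)
    (hM : ∀ i j, M i j = hahnVal (MK i j))
    (hgen : TropGeneric M) :
    ∀ (k : ℕ) (r : Fin k → Fin p) (c : Fin k → Fin q),
      Function.Injective r → Function.Injective c →
        (Matrix.of fun i j => MK (r i) (c j)).det ≠ 0 ∨
          ∀ σ : Equiv.Perm (Fin k), ∏ i, MK (r i) (c (σ i)) = 0 := by
  intro k r c hr hc
  have hval : (Matrix.of fun i j => M (r i) (c j)) =
      (Matrix.of fun i j => MK (r i) (c j)).map hahnVal := by
    ext i j
    simp [hM]
  rcases hgen k r c hr hc with h | h <;> rw [hval] at h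
  · exact .inl (det_ne_zero_of_tropNonsingular _ h)
  · exact .inr (prod_eq_zero_of_tper_map_eq_bot _ h)

end
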